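/- For every skew-symmetric real 4×4 matrix F (indices in Fin 4 = {0,1,2,3}), with E_i := F(0,i) and B_i := ½ Σ_{j,k ∈ {1,2,3}} ε_{ijk} F(j,k) for i ∈ {1,2,3}, the determinant of η + F satisfies det(η + F) = −1 + Σ_i E_i² − Σ_i B_i² + (Σ_i E_i·B_i)², where η = diag(−1,1,1,1). (This is the Born–Infeld determinant identity det(η + F) = −1 + E·E − B·B + (B·E)².) -/

import Mathlib

noncomputable section

open Matrix

/-- The Levi-Civita symbol on three indices, with `ε₀₁₂ = 1`. -/
def eps3 (i j k : Fin 3) : ℝ :=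
  ((j : ℝ) - (i : ℝ)) * ((k : ℝ) - (i : ℝ)) * ((k : ℝ) - (j : ℝ)) / 2

/-- The `4×4` Minkowski metric matrix `η = diag(−1,1,1,1)`. -/
def etaM : Matrix (Fin 4) (Fin 4) ℝ := diagonal ![-1, 1, 1, 1]

/-- The electric components `E_i = F_{0i}` of a skew-symmetric `F`. -/
def Efield (F : Matrix (Fin 4) (Fin 4) ℝ) (i : Fin 3) : ℝ := F 0 i.succ

/-- The magnetic components `B_i = ½ ε_{ijk} F_{jk}` of a skew-symmetric `F`. -/
def Bfield (F : Matrix (Fin 4) (Fin 4) ℝ) (i : Fin 3) : ℝ :=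
  (1 / 2) * ∑ j : Fin 3, ∑ k : Fin 3, eps3 i j k * F j.succ k.succ

/-! A skew-symmetric `F` is determined by its six entries `E` and `B`, so `η + F` can be written
out in terms of them; the identity is then a polynomial identity in `E` and `B`, checked by
Laplace expansion. -/

/-- `η + F` for the skew-symmetric `F` with `F₀ᵢ = Eᵢ` and spatial block `Fⱼₖ = εᵢⱼₖ Bᵢ`. -/
def etaAddFieldMatrix {R : Type*} [Ring R] (E B : Fin 3 → R) : Matrix (Fin 4) (Fin 4) R :=
  !![-1, E 0, E 1, E 2;
     -E 0, 1, B 2, -B 1;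
     -E 1, -B 2, 1, B 0;
     -E 2, B 1, -B 0, 1]

theorem det_etaAddFieldMatrix {R : Type*} [CommRing R] (E B : Fin 3 → R) :
    (etaAddFieldMatrix E B).det
      = -1 + ∑ i, E i ^ 2 - ∑ i, B i ^ 2 + (∑ i, E i * B i) ^ 2 := by
  simp [etaAddFieldMatrix, det_succ_row_zero, Fin.sum_univ_succ, Fin.succAbove]
  ring

theorem Bfield_eq_of_skew {F : Matrix (Fin 4) (Fin 4) ℝ} (hF : ∀ a b, F a b = -F b a) :
    Bfield F = ![F 2 3, F 3 1, F 1 2] := by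
  ext i
  fin_cases i <;> simp [Bfield, eps3, Fin.sum_univ_three] <;> norm_num <;>
    linarith [hF 1 2, hF 2 3, hF 3 1]

theorem etaM_add_eq_etaAddFieldMatrix {F : Matrix (Fin 4) (Fin 4) ℝ}
    (hF : ∀ a b, F a b = -F b a) :
    etaM + F = etaAddFieldMatrix (Efield F) (Bfield F) := by
  have hdiag : ∀ a, F a a = 0 := fun a => by linarith [hF a a]
  rw [Bfield_eq_of_skew hF]
  ext a b
  fin_cases a <;> fin_cases b <;>
    simp [etaM, etaAddFieldMatrix, Efield, hdiag, hF 1 0, hF 2 0, hF 3 0, hF 2 1, hF 3 1, hF 3 2]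

/-- The Born–Infeld determinant identity
`det(η + F) = −1 + E·E − B·B + (B·E)²` for skew-symmetric `F`. -/
theorem born_infeld_determinant (F : Matrix (Fin 4) (Fin 4) ℝ)
    (hF : ∀ a b, F a b = -F b a) :
    (etaM + F).det
      = -1 + (∑ i : Fin 3, Efield F i ^ 2) - (∑ i : Fin 3, Bfield F i ^ 2)
          + (∑ i : Fin 3, Efield F i * Bfield F i) ^ 2 := by
  rw [etaM_add_eq_etaAddFieldMatrix hF, det_etaAddFieldMatrix]
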